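/- arXiv:2111.14716 — 3 statements merged into one kernel-verified Lean document; each statement's English description precedes it below -/
import Mathlib

section
/- Let T_a and T_b be vertex-disjoint trees with l₁ and l₂ pendant vertices respectively, and let u ∈ V(T_a), v ∈ V(T_b) both be non-pendant vertices. Let T = T_a·T_b(u,v) be the tree obtained by identifying u and v. Then TW(T) = TW(T_a) + TW(T_b) + l₂·d⁺_{T_a}(u) + l₁·d⁺_{T_b}(v). -/
open Finset SimpleGraph

noncomputable section
open scoped Classical

/-- The set of pendant (degree-1) vertices of a finite graph. -/
def pendants {V : Type*} (G : SimpleGraph V) [Fintype V] : Finset V :=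
  Finset.univ.filter fun v => G.degree v = 1

/-- `dplus G u` is the sum of the distances from `u` to the pendant vertices of `G`. -/
def dplus {V : Type*} (G : SimpleGraph V) [Fintype V] (u : V) : ℕ :=
  ∑ v ∈ pendants G, G.dist u v

/-- Terminal Wiener index: sum of distances over unordered pairs of pendant vertices
(each unordered pair is counted twice in the double sum, hence the division by 2). -/
def TW {V : Type*} (G : SimpleGraph V) [Fintype V] : ℕ :=
  (∑ u ∈ pendants G, ∑ v ∈ pendants G, G.dist u v) / 2

/-- The graph obtained from `A` and `B` by identifying `u ∈ A` with `v ∈ B`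
(the merged vertex is represented by `Sum.inl u`). -/
def glue {α β : Type*} (A : SimpleGraph α) (B : SimpleGraph β) (u : α) (v : β) :
    SimpleGraph (α ⊕ {b : β // b ≠ v}) :=
  SimpleGraph.fromRel fun x y =>
    match x, y with
    | Sum.inl a, Sum.inl a' => A.Adj a a'
    | Sum.inr b, Sum.inr b' => B.Adj b.1 b'.1
    | Sum.inl a, Sum.inr b => a = u ∧ B.Adj v b.1
    | Sum.inr _, Sum.inl _ => False

namespace GlueAux

variable {α β : Type*} {A : SimpleGraph α} {B : SimpleGraph β} {u : α} {v : β}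

lemma glue_adj_inl_inl {a a' : α} :
    (glue A B u v).Adj (Sum.inl a) (Sum.inl a') ↔ A.Adj a a' := by
  simp only [glue, fromRel_adj]
  constructor
  · rintro ⟨_, h | h⟩
    · exact h
    · exact h.symm
  · intro h
    exact ⟨by simpa using h.ne, Or.inl h⟩

lemma glue_adj_inl_inr {a : α} {b : {b : β // b ≠ v}} :
    (glue A B u v).Adj (Sum.inl a) (Sum.inr b) ↔ a = u ∧ B.Adj v b.1 := by
  simp only [glue, fromRel_adj]
  constructor
  · rintro ⟨_, h | h⟩
    · exact h
    · exact h.elim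
  · intro h
    exact ⟨by simp, Or.inl h⟩

lemma glue_adj_inr_inl {a : α} {b : {b : β // b ≠ v}} :
    (glue A B u v).Adj (Sum.inr b) (Sum.inl a) ↔ a = u ∧ B.Adj v b.1 := by
  rw [adj_comm]; exact glue_adj_inl_inr

lemma glue_adj_inr_inr {b b' : {b : β // b ≠ v}} :
    (glue A B u v).Adj (Sum.inr b) (Sum.inr b') ↔ B.Adj b.1 b'.1 := by
  simp only [glue, fromRel_adj]
  constructor
  · rintro ⟨_, h | h⟩
    · exact h
    · exact h.symm
  · intro h
    exact ⟨by simpa [Subtype.ext_iff] using h.ne, Or.inl h⟩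

/-- Embedding of `A` into the glued graph. -/
def homA (A : SimpleGraph α) (B : SimpleGraph β) (u : α) (v : β) :
    A →g glue A B u v :=
  ⟨Sum.inl, fun h => glue_adj_inl_inl.2 h⟩

/-- The canonical map from `β` to the vertex set of the glued graph. -/
def fB (u : α) (v : β) (b : β) : α ⊕ {b : β // b ≠ v} :=
  if h : b = v then Sum.inl u else Sum.inr ⟨b, h⟩

lemma fB_v : fB u v v = Sum.inl u := by simp [fB]

lemma fB_ne {b : β} (h : b ≠ v) : fB u v b = Sum.inr ⟨b, h⟩ := by simp [fB, h]

lemma fB_injective : Function.Injective (fB u v : β → α ⊕ {b : β // b ≠ v}) := by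
  intro b b' h
  by_cases hb : b = v <;> by_cases hb' : b' = v <;>
    simp [fB, hb, hb', Subtype.ext_iff] at h ⊢ <;> simp [h, hb, hb']

/-- Embedding of `B` into the glued graph. -/
def homB (A : SimpleGraph α) (B : SimpleGraph β) (u : α) (v : β) :
    B →g glue A B u v := by
  refine ⟨fB u v, ?_⟩
  intro b b' h
  by_cases hb : b = v
  · have h' : B.Adj v b' := hb ▸ h
    have hb' : b' ≠ v := h'.ne'
    rw [show fB u v b = Sum.inl u by simp [fB, hb], fB_ne hb']
    exact glue_adj_inl_inr.2 ⟨rfl, h'⟩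
  · by_cases hb' : b' = v
    · have h' : B.Adj b v := hb' ▸ h
      rw [show fB u v b' = Sum.inl u by simp [fB, hb'], fB_ne hb]
      exact glue_adj_inr_inl.2 ⟨rfl, h'.symm⟩
    · rw [fB_ne hb, fB_ne hb']
      exact glue_adj_inr_inr.2 h

/-- A map which sends adjacent vertices to equal-or-adjacent vertices shortens walks. -/
lemma exists_walk_pseudo {V W : Type*} {G : SimpleGraph V} {H : SimpleGraph W} (f : V → W)
    (hf : ∀ ⦃a b⦄, G.Adj a b → f a = f b ∨ H.Adj (f a) (f b)) {x y : V} (w : G.Walk x y) :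
    ∃ w' : H.Walk (f x) (f y), w'.length ≤ w.length := by
  induction w with
  | nil => exact ⟨.nil, le_rfl⟩
  | cons h p ih =>
    obtain ⟨w', hw'⟩ := ih
    rcases hf h with he | ha
    · exact ⟨w'.copy he.symm rfl, by rw [Walk.length_copy, Walk.length_cons]; omega⟩
    · exact ⟨.cons ha w', by simpa using Nat.succ_le_succ hw'⟩

lemma dist_le_pseudo {V W : Type*} {G : SimpleGraph V} {H : SimpleGraph W} (f : V → W)
    (hf : ∀ ⦃a b⦄, G.Adj a b → f a = f b ∨ H.Adj (f a) (f b)) {x y : V}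
    (hr : G.Reachable x y) : H.dist (f x) (f y) ≤ G.dist x y := by
  obtain ⟨w, hw⟩ := hr.exists_walk_length_eq_dist
  obtain ⟨w', hw'⟩ := exists_walk_pseudo f hf w
  exact (SimpleGraph.dist_le w').trans (hw ▸ hw')

/-- Projection to `α`. -/
def pA (u : α) (v : β) : α ⊕ {b : β // b ≠ v} → α := Sum.elim id fun _ => u

/-- Projection to `β`. -/
def pB (u : α) (v : β) : α ⊕ {b : β // b ≠ v} → β := Sum.elim (fun _ => v) Subtype.val

lemma pA_pseudo : ∀ ⦃x y⦄, (glue A B u v).Adj x y → pA u v x = pA u v y ∨ A.Adj (pA u v x) (pA u v y) := by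
  rintro (a | b) (a' | b') h
  · exact Or.inr (glue_adj_inl_inl.1 h)
  · exact Or.inl (by simpa [pA] using (glue_adj_inl_inr.1 h).1)
  · exact Or.inl (by simpa [pA] using ((glue_adj_inr_inl.1 h).1).symm)
  · exact Or.inl rfl

lemma pB_pseudo : ∀ ⦃x y⦄, (glue A B u v).Adj x y → pB u v x = pB u v y ∨ B.Adj (pB u v x) (pB u v y) := by
  rintro (a | b) (a' | b') h
  · exact Or.inl rfl
  · exact Or.inr (glue_adj_inl_inr.1 h).2
  · exact Or.inr (glue_adj_inr_inl.1 h).2.symm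
  · exact Or.inr (glue_adj_inr_inr.1 h)

variable (hA : A.Connected) (hB : B.Connected)

lemma homA_apply' (a : α) : homA A B u v a = Sum.inl a := rfl

lemma homB_apply' (b : β) : homB A B u v b = fB u v b := rfl

include hA hB in
lemma glue_connected : (glue A B u v).Connected := by
  refine (connected_iff_exists_forall_reachable _).2 ⟨Sum.inl u, ?_⟩
  rintro (a | b)
  · exact Reachable.map (homA A B u v) (hA.preconnected u a)
  · have := Reachable.map (homB A B u v) (hB.preconnected v b.1)
    have h1 : (homB A B u v) v = (Sum.inl u : α ⊕ {b : β // b ≠ v}) := by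
      rw [homB_apply', fB_v]
    have h2 : (homB A B u v) b.1 = (Sum.inr b : α ⊕ {b : β // b ≠ v}) := by
      rw [homB_apply', fB_ne b.2]
    rwa [h1, h2] at this

include hA hB in
lemma dist_inl_inl (a a' : α) :
    (glue A B u v).dist (Sum.inl a) (Sum.inl a') = A.dist a a' := by
  refine le_antisymm ?_ ?_
  · obtain ⟨w, hw⟩ := hA.exists_walk_length_eq_dist a a'
    have := SimpleGraph.dist_le (w.map (homA A B u v))
    rw [Walk.length_map, hw] at this
    simpa [homA_apply'] using this
  · have := dist_le_pseudo (pA u v) pA_pseudo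
      (((glue_connected hA hB).preconnected) (Sum.inl a) (Sum.inl a'))
    simpa [pA] using this

include hA hB in
lemma dist_inr_inr (b b' : {b : β // b ≠ v}) :
    (glue A B u v).dist (Sum.inr b) (Sum.inr b') = B.dist b.1 b'.1 := by
  refine le_antisymm ?_ ?_
  · obtain ⟨w, hw⟩ := hB.exists_walk_length_eq_dist b.1 b'.1
    have h1 : (homB A B u v) b.1 = (Sum.inr b : α ⊕ {b : β // b ≠ v}) := by
      rw [homB_apply', fB_ne b.2]
    have h2 : (homB A B u v) b'.1 = (Sum.inr b' : α ⊕ {b : β // b ≠ v}) := by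
      rw [homB_apply', fB_ne b'.2]
    have := SimpleGraph.dist_le ((w.map (homB A B u v)).copy h1 h2)
    simpa [hw] using this
  · have := dist_le_pseudo (pB u v) pB_pseudo
      (((glue_connected hA hB).preconnected) (Sum.inr b) (Sum.inr b'))
    simpa [pB] using this

include hA hB in
lemma dist_inlu_inr (b : {b : β // b ≠ v}) :
    (glue A B u v).dist (Sum.inl u) (Sum.inr b) = B.dist v b.1 := by
  refine le_antisymm ?_ ?_
  · obtain ⟨w, hw⟩ := hB.exists_walk_length_eq_dist v b.1
    have h1 : (homB A B u v) v = (Sum.inl u : α ⊕ {b : β // b ≠ v}) := by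
      rw [homB_apply', fB_v]
    have h2 : (homB A B u v) b.1 = (Sum.inr b : α ⊕ {b : β // b ≠ v}) := by
      rw [homB_apply', fB_ne b.2]
    have := SimpleGraph.dist_le ((w.map (homB A B u v)).copy h1 h2)
    simpa [hw] using this
  · have := dist_le_pseudo (pB u v) pB_pseudo
      (((glue_connected hA hB).preconnected) (Sum.inl u) (Sum.inr b))
    simpa [pB] using this

lemma cross_mem {s t : α ⊕ {b : β // b ≠ v}} (w : (glue A B u v).Walk s t) :
    (∃ x, s = Sum.inl x) → (∃ y, t = Sum.inr y) → Sum.inl u ∈ w.support := by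
  induction w with
  | nil =>
    rintro ⟨x, rfl⟩ ⟨y, hy⟩
    exact absurd hy (by simp)
  | @cons s m t h p ih =>
    rintro ⟨x, rfl⟩ hy
    cases m with
    | inl m =>
      rw [Walk.support_cons]
      exact List.mem_cons_of_mem _ (ih ⟨m, rfl⟩ hy)
    | inr m =>
      have hx : x = u := (glue_adj_inl_inr.1 h).1
      rw [Walk.support_cons, hx]
      exact List.mem_cons_self

include hA hB in
lemma dist_inl_inr (a : α) (b : {b : β // b ≠ v}) :
    (glue A B u v).dist (Sum.inl a) (Sum.inr b) = A.dist a u + B.dist v b.1 := by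
  refine le_antisymm ?_ ?_
  · obtain ⟨wa, hwa⟩ := hA.exists_walk_length_eq_dist a u
    obtain ⟨wb, hwb⟩ := hB.exists_walk_length_eq_dist v b.1
    have h1 : (homB A B u v) v = (Sum.inl u : α ⊕ {b : β // b ≠ v}) := by
      rw [homB_apply', fB_v]
    have h2 : (homB A B u v) b.1 = (Sum.inr b : α ⊕ {b : β // b ≠ v}) := by
      rw [homB_apply', fB_ne b.2]
    have := SimpleGraph.dist_le ((wa.map (homA A B u v)).append
      ((wb.map (homB A B u v)).copy h1 h2))
    simp only [Walk.length_append, Walk.length_map, Walk.length_copy, hwa, hwb] at this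
    simpa [homA_apply', hwb] using this
  · obtain ⟨w, hw⟩ :=
      (((glue_connected hA hB).preconnected) (Sum.inl a) (Sum.inr b)).exists_walk_length_eq_dist
    have hmem : Sum.inl u ∈ w.support := cross_mem w ⟨a, rfl⟩ ⟨b, rfl⟩
    have hsplit := congrArg Walk.length (w.take_spec hmem)
    rw [Walk.length_append] at hsplit
    have h1 : (glue A B u v).dist (Sum.inl a) (Sum.inl u) ≤ (w.takeUntil _ hmem).length :=
      SimpleGraph.dist_le _
    have h2 : (glue A B u v).dist (Sum.inl u) (Sum.inr b) ≤ (w.dropUntil _ hmem).length :=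
      SimpleGraph.dist_le _
    rw [dist_inl_inl hA hB] at h1
    rw [dist_inlu_inr hA hB] at h2
    omega

/-! ### Degrees and pendant vertices of the glued graph -/

variable [Fintype α] [Fintype β]

lemma nbr_inl {a : α} (hau : a ≠ u) :
    (glue A B u v).neighborFinset (Sum.inl a) = (A.neighborFinset a).image Sum.inl := by
  ext x
  cases x with
  | inl a' => simp [mem_neighborFinset, glue_adj_inl_inl]
  | inr b => simp [mem_neighborFinset, glue_adj_inl_inr, hau]

lemma degree_inl {a : α} (hau : a ≠ u) :
    (glue A B u v).degree (Sum.inl a) = A.degree a := by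
  rw [SimpleGraph.degree, nbr_inl hau, Finset.card_image_of_injective _ Sum.inl_injective]
  rfl

lemma nbr_inr (b : {b : β // b ≠ v}) :
    (glue A B u v).neighborFinset (Sum.inr b) = (B.neighborFinset b.1).image (fB u v) := by
  ext x
  cases x with
  | inl a =>
    simp only [mem_neighborFinset, glue_adj_inr_inl, Finset.mem_image]
    constructor
    · rintro ⟨rfl, hadj⟩
      exact ⟨v, by simpa [mem_neighborFinset] using hadj.symm, fB_v⟩
    · rintro ⟨c, hc, hfc⟩
      by_cases hcv : c = v
      · subst hcv
        rw [fB_v] at hfc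
        obtain rfl : u = a := by simpa using hfc
        exact ⟨rfl, by simpa [mem_neighborFinset] using hc.symm⟩
      · rw [fB_ne hcv] at hfc; exact absurd hfc (by simp)
  | inr b' =>
    simp only [mem_neighborFinset, glue_adj_inr_inr, Finset.mem_image]
    constructor
    · intro hadj
      refine ⟨b'.1, ?_, ?_⟩
      · simpa [mem_neighborFinset] using hadj
      · rw [fB_ne b'.2]
    · rintro ⟨c, hc, hfc⟩
      by_cases hcv : c = v
      · subst hcv; rw [fB_v] at hfc; exact absurd hfc (by simp)
      · rw [fB_ne hcv] at hfc
        obtain rfl : c = b'.1 := by simpa [Subtype.ext_iff] using hfc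
        simpa [mem_neighborFinset] using hc

lemma degree_inr (b : {b : β // b ≠ v}) :
    (glue A B u v).degree (Sum.inr b) = B.degree b.1 := by
  rw [SimpleGraph.degree, nbr_inr, Finset.card_image_of_injective _ fB_injective]
  rfl

lemma nbr_inlu :
    (glue A B u v).neighborFinset (Sum.inl u) =
      (A.neighborFinset u).image Sum.inl ∪ (B.neighborFinset v).image (fB u v) := by
  ext x
  cases x with
  | inl a =>
    simp only [mem_neighborFinset, glue_adj_inl_inl, Finset.mem_union, Finset.mem_image]
    constructor
    · intro h; exact Or.inl ⟨a, by simpa [mem_neighborFinset] using h, rfl⟩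
    · rintro (⟨c, hc, hfc⟩ | ⟨c, hc, hfc⟩)
      · obtain rfl : c = a := by simpa using hfc
        simpa [mem_neighborFinset] using hc
      · have hcv : c ≠ v := by
          intro h; subst h; simpa [mem_neighborFinset] using hc
        rw [fB_ne hcv] at hfc; exact absurd hfc (by simp)
  | inr b =>
    simp only [mem_neighborFinset, glue_adj_inl_inr, Finset.mem_union, Finset.mem_image]
    constructor
    · rintro ⟨-, hadj⟩
      exact Or.inr ⟨b.1, by simpa [mem_neighborFinset] using hadj, by rw [fB_ne b.2]⟩
    · rintro (⟨c, hc, hfc⟩ | ⟨c, hc, hfc⟩)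
      · exact absurd hfc (by simp)
      · have hcv : c ≠ v := by
          intro h; subst h; simpa [mem_neighborFinset] using hc
        rw [fB_ne hcv] at hfc
        obtain rfl : c = b.1 := by simpa [Subtype.ext_iff] using hfc
        exact ⟨trivial, by simpa [mem_neighborFinset] using hc⟩

lemma degree_inlu :
    (glue A B u v).degree (Sum.inl u) = A.degree u + B.degree v := by
  rw [SimpleGraph.degree, nbr_inlu, Finset.card_union_of_disjoint, 
    Finset.card_image_of_injective _ Sum.inl_injective,
    Finset.card_image_of_injective _ fB_injective]
  · rfl
  · rw [Finset.disjoint_left]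
    rintro x hx hx'
    obtain ⟨c, hc, rfl⟩ := Finset.mem_image.1 hx
    obtain ⟨c', hc', hfc⟩ := Finset.mem_image.1 hx'
    have hcv : c' ≠ v := by
      intro h; subst h; simpa [mem_neighborFinset] using hc'
    rw [fB_ne hcv] at hfc
    exact absurd hfc (by simp)

lemma degree_pos_of_connected {V : Type*} [Fintype V] {G : SimpleGraph V}
    (hG : G.Connected) (hcard : 1 < Fintype.card V) (x : V) : 0 < G.degree x := by
  obtain ⟨y, hy⟩ := Fintype.exists_ne_of_one_lt_card hcard x
  obtain ⟨w⟩ := hG.preconnected x y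
  cases w with
  | nil => exact absurd rfl hy.symm
  | cons h p => exact G.degree_pos_iff_exists_adj x |>.2 ⟨_, h⟩

/-- Evenness of a symmetric double sum with zero diagonal. -/
lemma even_double_sum {V : Type*} (s : Finset V) (d : V → V → ℕ)
    (hsymm : ∀ x y, d x y = d y x) (hdiag : ∀ x, d x x = 0) :
    Even (∑ x ∈ s, ∑ y ∈ s, d x y) := by
  classical
  induction s using Finset.induction with
  | empty => simp
  | @insert a s ha ih =>
    rw [Finset.sum_insert ha]
    have hinner : ∀ x, ∑ y ∈ insert a s, d x y = d x a + ∑ y ∈ s, d x y :=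
      fun x => Finset.sum_insert ha
    rw [hinner]
    rw [Finset.sum_congr rfl fun x _ => hinner x, Finset.sum_add_distrib]
    have hsw : ∑ x ∈ s, d x a = ∑ y ∈ s, d a y :=
      Finset.sum_congr rfl fun x _ => hsymm x a
    obtain ⟨k, hk⟩ := ih
    exact ⟨∑ y ∈ s, d a y + k, by rw [hsw]; rw [hdiag a]; omega⟩

end GlueAux

open GlueAux in
/-- Gluing formula for the terminal Wiener index of two trees identified at
non-pendant vertices. -/
theorem stmt6 {α β : Type*} [Fintype α] [Fintype β]
    (Ta : SimpleGraph α) (Tb : SimpleGraph β) (u : α) (v : β)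
    (hTa : Ta.IsTree) (hTb : Tb.IsTree)
    (ha : 3 ≤ Fintype.card α) (hb : 3 ≤ Fintype.card β)
    (hu : Ta.degree u ≠ 1) (hv : Tb.degree v ≠ 1) :
    TW (glue Ta Tb u v) =
      TW Ta + TW Tb + (pendants Tb).card * dplus Ta u +
        (pendants Ta).card * dplus Tb v := by
  have hA : Ta.Connected := hTa.isConnected
  have hB : Tb.Connected := hTb.isConnected
  have hdu : 0 < Ta.degree u := degree_pos_of_connected hA (by omega) u
  have hdv : 0 < Tb.degree v := degree_pos_of_connected hB (by omega) v
  -- pendants of the glued graph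
  have hpend : pendants (glue Ta Tb u v) =
      (pendants Ta).image Sum.inl ∪ (pendants Tb).image (fB u v) := by
    ext x
    cases x with
    | inl a =>
      by_cases hau : a = u
      · subst hau
        simp only [pendants, Finset.mem_filter, Finset.mem_univ, true_and,
          Finset.mem_union, Finset.mem_image]
        rw [degree_inlu]
        constructor
        · intro h; omega
        · rintro (⟨c, hc, hfc⟩ | ⟨c, hc, hfc⟩)
          · obtain rfl : c = a := by simpa using hfc
            exact absurd hc hu
          · by_cases hcv : c = v
            · subst hcv; exact absurd hc hv
            · rw [fB_ne hcv] at hfc; exact absurd hfc (by simp)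
      · simp only [pendants, Finset.mem_filter, Finset.mem_univ, true_and,
          Finset.mem_union, Finset.mem_image]
        rw [degree_inl hau]
        constructor
        · intro h; exact Or.inl ⟨a, h, rfl⟩
        · rintro (⟨c, hc, hfc⟩ | ⟨c, hc, hfc⟩)
          · obtain rfl : c = a := by simpa using hfc
            exact hc
          · by_cases hcv : c = v
            · subst hcv; rw [fB_v] at hfc
              obtain rfl : u = a := by simpa using hfc
              exact absurd rfl hau
            · rw [fB_ne hcv] at hfc; exact absurd hfc (by simp)
    | inr b =>
      simp only [pendants, Finset.mem_filter, Finset.mem_univ, true_and,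
        Finset.mem_union, Finset.mem_image]
      rw [degree_inr]
      constructor
      · intro h; exact Or.inr ⟨b.1, h, by rw [fB_ne b.2]⟩
      · rintro (⟨c, hc, hfc⟩ | ⟨c, hc, hfc⟩)
        · exact absurd hfc (by simp)
        · by_cases hcv : c = v
          · subst hcv; rw [fB_v] at hfc; exact absurd hfc (by simp)
          · rw [fB_ne hcv] at hfc
            obtain rfl : c = b.1 := by simpa [Subtype.ext_iff] using hfc
            exact hc
  -- pendants of Tb are not v, pendants of Ta are not u
  have hPAu : ∀ a ∈ pendants Ta, a ≠ u := by
    intro a haP h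
    exact hu (h ▸ (by simpa [pendants] using haP))
  have hPBv : ∀ b ∈ pendants Tb, b ≠ v := by
    intro b hbP h
    exact hv (h ▸ (by simpa [pendants] using hbP))
  have hdisj : Disjoint ((pendants Ta).image (Sum.inl : α → α ⊕ {b : β // b ≠ v}))
      ((pendants Tb).image (fB u v)) := by
    rw [Finset.disjoint_left]
    rintro x hx hx'
    obtain ⟨c, hc, rfl⟩ := Finset.mem_image.1 hx
    obtain ⟨c', hc', hfc⟩ := Finset.mem_image.1 hx'
    rw [fB_ne (hPBv c' hc')] at hfc
    exact absurd hfc (by simp)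
  -- distances in the glued graph between pendant images
  have hdAA : ∀ a a' : α,
      (glue Ta Tb u v).dist (Sum.inl a) (Sum.inl a') = Ta.dist a a' :=
    fun a a' => dist_inl_inl hA hB a a'
  have hdAB : ∀ (a : α) (c : β) (hc : c ≠ v),
      (glue Ta Tb u v).dist (Sum.inl a) (fB u v c) = Ta.dist a u + Tb.dist v c := by
    intro a c hc
    rw [fB_ne hc]
    exact dist_inl_inr hA hB a ⟨c, hc⟩
  have hdBB : ∀ (c c' : β) (hc : c ≠ v) (hc' : c' ≠ v),
      (glue Ta Tb u v).dist (fB u v c) (fB u v c') = Tb.dist c c' := by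
    intro c c' hc hc'
    rw [fB_ne hc, fB_ne hc']
    exact dist_inr_inr hA hB ⟨c, hc⟩ ⟨c', hc'⟩
  -- abbreviations
  set PA := pendants Ta with hPA
  set PB := pendants Tb with hPB
  set G := glue Ta Tb u v with hG
  set SA := ∑ x ∈ PA, ∑ y ∈ PA, Ta.dist x y with hSA
  set SB := ∑ x ∈ PB, ∑ y ∈ PB, Tb.dist x y with hSB
  set M := PB.card * dplus Ta u + PA.card * dplus Tb v with hM
  have hsum : ∑ x ∈ pendants G, ∑ y ∈ pendants G, G.dist x y = SA + SB + M + M := by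
    rw [hpend, Finset.sum_union hdisj]
    have hinner : ∀ x, ∑ y ∈ PA.image Sum.inl ∪ PB.image (fB u v), G.dist x y =
        (∑ y ∈ PA.image Sum.inl, G.dist x y) + ∑ y ∈ PB.image (fB u v), G.dist x y :=
      fun x => Finset.sum_union hdisj
    simp_rw [hinner]
    rw [Finset.sum_image (fun a _ a' _ h => Sum.inl_injective h),
      Finset.sum_image (fun a _ a' _ h => fB_injective h)]
    simp_rw [Finset.sum_image (fun a _ a' _ h => Sum.inl_injective h),
      Finset.sum_image (fun a _ a' _ h => fB_injective h)]
    rw [Finset.sum_add_distrib, Finset.sum_add_distrib]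
    have e1 : ∑ a ∈ PA, ∑ a' ∈ PA, G.dist (Sum.inl a) (Sum.inl a') = SA :=
      Finset.sum_congr rfl fun a _ => Finset.sum_congr rfl fun a' _ => hdAA a a'
    have e2 : ∑ a ∈ PA, ∑ c ∈ PB, G.dist (Sum.inl a) (fB u v c) = M := by
      rw [hM]
      rw [Finset.sum_congr rfl fun a _ => Finset.sum_congr rfl fun c hc =>
        hdAB a c (hPBv c hc)]
      have : ∀ a ∈ PA, ∑ c ∈ PB, (Ta.dist a u + Tb.dist v c) =
          PB.card * Ta.dist a u + dplus Tb v := by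
        intro a _
        rw [Finset.sum_add_distrib, Finset.sum_const, smul_eq_mul]
        rfl
      rw [Finset.sum_congr rfl this, Finset.sum_add_distrib, Finset.sum_const, smul_eq_mul,
        ← Finset.mul_sum]
      congr 1
      congr 1
      rw [dplus]
      exact Finset.sum_congr rfl fun a _ => Ta.dist_comm
    have e3 : ∑ c ∈ PB, ∑ a ∈ PA, G.dist (fB u v c) (Sum.inl a) = M := by
      rw [← e2, Finset.sum_comm]
      exact Finset.sum_congr rfl fun a _ => Finset.sum_congr rfl fun c _ => G.dist_comm
    have e4 : ∑ c ∈ PB, ∑ c' ∈ PB, G.dist (fB u v c) (fB u v c') = SB :=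
      Finset.sum_congr rfl fun c hc => Finset.sum_congr rfl fun c' hc' =>
        hdBB c c' (hPBv c hc) (hPBv c' hc')
    rw [e1, e2, e3, e4]
    omega
  have hevenA : Even SA :=
    even_double_sum PA _ (fun x y => Ta.dist_comm) (fun x => SimpleGraph.dist_self)
  have hevenB : Even SB :=
    even_double_sum PB _ (fun x y => Tb.dist_comm) (fun x => SimpleGraph.dist_self)
  obtain ⟨ka, hka⟩ := hevenA
  obtain ⟨kb, hkb⟩ := hevenB
  have hTWa : TW Ta = ka := by rw [TW, ← hPA, ← hSA, hka]; omega
  have hTWb : TW Tb = kb := by rw [TW, ← hPB, ← hSB, hkb]; omega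
  have hTWG : TW G = ka + kb + M := by rw [TW, hsum, hka, hkb]; omega
  rw [hTWG, hTWa, hTWb, hM]
  omega
end
end

section
/- Let T_a, T_b, T_c be pairwise vertex-disjoint trees with l₁, l₂, l₃ pendant vertices respectively, and let u ∈ V(T_a), v ∈ V(T_b), w ∈ V(T_c) be non-pendant vertices. Let T be the tree obtained by identifying u, v, and w into a single vertex. Then TW(T) = TW(T_a) + TW(T_b) + TW(T_c) + (l₂+l₃)·d⁺(u) + (l₁+l₃)·d⁺(v) + (l₁+l₂)·d⁺(w). -/
open Finset SimpleGraph

noncomputable section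
open scoped Classical

section GlueLemmas

variable {α β : Type*} (A : SimpleGraph α) (B : SimpleGraph β) (u : α) (v : β)

@[simp] lemma glue_adj_inl_inl {a a' : α} :
    (glue A B u v).Adj (Sum.inl a) (Sum.inl a') ↔ A.Adj a a' := by
  constructor
  · rintro ⟨-, h | h⟩
    · exact h
    · exact h.symm
  · intro h
    exact ⟨by simp [h.ne], Or.inl h⟩

@[simp] lemma glue_adj_inl_inr {a : α} {b : {b : β // b ≠ v}} :
    (glue A B u v).Adj (Sum.inl a) (Sum.inr b) ↔ a = u ∧ B.Adj v b.1 := by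
  constructor
  · rintro ⟨-, h | h⟩
    · exact h
    · exact h.elim
  · intro h
    exact ⟨by simp, Or.inl h⟩

@[simp] lemma glue_adj_inr_inl {a : α} {b : {b : β // b ≠ v}} :
    (glue A B u v).Adj (Sum.inr b) (Sum.inl a) ↔ a = u ∧ B.Adj v b.1 := by
  rw [SimpleGraph.adj_comm]; exact glue_adj_inl_inr A B u v

@[simp] lemma glue_adj_inr_inr {b b' : {b : β // b ≠ v}} :
    (glue A B u v).Adj (Sum.inr b) (Sum.inr b') ↔ B.Adj b.1 b'.1 := by
  constructor
  · rintro ⟨-, h | h⟩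
    · exact h
    · exact h.symm
  · intro h
    exact ⟨by simp [Subtype.ext_iff, h.ne], Or.inl h⟩

/-- Left inclusion as a graph hom. -/
def homL : A →g glue A B u v where
  toFun := Sum.inl
  map_rel' := by intro a a' h; simpa using h

/-- Right inclusion map. -/
def toR (b : β) : α ⊕ {b : β // b ≠ v} :=
  if h : b = v then Sum.inl u else Sum.inr ⟨b, h⟩

lemma toR_of_ne {b : β} (h : b ≠ v) : toR u v b = Sum.inr ⟨b, h⟩ := dif_neg h

lemma toR_v : toR u v v = Sum.inl u := dif_pos rfl

/-- Right inclusion as a graph hom. -/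
def homR : B →g glue A B u v where
  toFun := toR u v
  map_rel' := by
    intro b b' h
    by_cases hb : b = v
    · have h' : B.Adj v b' := hb ▸ h
      rw [hb, toR_v u v, toR_of_ne u v h'.ne']
      simp [h']
    · by_cases hb' : b' = v
      · have h' : B.Adj b v := hb' ▸ h
        rw [hb', toR_v u v, toR_of_ne u v hb]
        simp [h'.symm]
      · rw [toR_of_ne u v hb, toR_of_ne u v hb']
        simp [h]

end GlueLemmas

section Walks

/-- A map sending edges to edges-or-equal does not increase distances (walk version). -/
lemma exists_walk_length_le {V W : Type*} {G : SimpleGraph V} {H : SimpleGraph W} (f : V → W)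
    (hf : ∀ ⦃x y⦄, G.Adj x y → f x = f y ∨ H.Adj (f x) (f y)) :
    ∀ {x y : V}, (p : G.Walk x y) → ∃ q : H.Walk (f x) (f y), q.length ≤ p.length := by
  intro x y p
  induction p with
  | nil => exact ⟨SimpleGraph.Walk.nil, le_rfl⟩
  | @cons x z y h p ih =>
    obtain ⟨q, hq⟩ := ih
    rcases hf h with he | ha
    · exact ⟨q.copy he.symm rfl, by simpa using hq.trans (Nat.le_succ _)⟩
    · exact ⟨SimpleGraph.Walk.cons ha q, by simpa using hq⟩

variable {α β : Type*} (A : SimpleGraph α) (B : SimpleGraph β) (u : α) (v : β)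

def projA (u₀ : α) (v₀ : β) : α ⊕ {b : β // b ≠ v₀} → α := Sum.elim id fun _ => u₀

def projB (u₀ : α) (v₀ : β) : α ⊕ {b : β // b ≠ v₀} → β := Sum.elim (fun _ => v₀) Subtype.val

lemma homR_coe_ne {b : β} (h : b ≠ v) : homR A B u v b = Sum.inr ⟨b, h⟩ := toR_of_ne u v h

lemma homR_coe_v : homR A B u v v = Sum.inl u := toR_v u v

lemma projA_spec : ∀ ⦃x y⦄, (glue A B u v).Adj x y →
    projA u v x = projA u v y ∨ A.Adj (projA u v x) (projA u v y) := by
  rintro (a | b) (a' | b') h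
  · exact Or.inr (by simpa [projA] using h)
  · exact Or.inl (by simpa [projA] using ((glue_adj_inl_inr A B u v).mp h).1)
  · exact Or.inl (by simpa [projA] using (((glue_adj_inr_inl A B u v).mp h).1).symm)
  · exact Or.inl rfl

lemma projB_spec : ∀ ⦃x y⦄, (glue A B u v).Adj x y →
    projB u v x = projB u v y ∨ B.Adj (projB u v x) (projB u v y) := by
  rintro (a | b) (a' | b') h
  · exact Or.inl rfl
  · exact Or.inr (by simpa [projB] using ((glue_adj_inl_inr A B u v).mp h).2)
  · exact Or.inr (by simpa [projB] using (((glue_adj_inr_inl A B u v).mp h).2).symm)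
  · exact Or.inr (by simpa [projB] using h)

lemma glue_connected (hA : A.Connected) (hB : B.Connected) : (glue A B u v).Connected := by
  have key : ∀ x, (glue A B u v).Reachable x (Sum.inl u) := by
    rintro (a | b)
    · exact (hA.preconnected a u).map (homL A B u v)
    · have := (hB.preconnected b.1 v).map (homR A B u v)
      rwa [show (homR A B u v) b.1 = Sum.inr b from homR_coe_ne A B u v b.2,
        homR_coe_v A B u v] at this
  haveI : Nonempty (α ⊕ {b : β // b ≠ v}) := ⟨Sum.inl u⟩
  exact ⟨fun x y => (key x).trans (key y).symm⟩

lemma glue_dist_inl_inl (hA : A.Connected) (a a' : α) :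
    (glue A B u v).dist (Sum.inl a) (Sum.inl a') = A.dist a a' := by
  apply le_antisymm
  · obtain ⟨p, hp⟩ := (hA.preconnected a a').exists_walk_length_eq_dist
    calc (glue A B u v).dist (Sum.inl a) (Sum.inl a') ≤ (p.map (homL A B u v)).length :=
          SimpleGraph.dist_le _
      _ = A.dist a a' := by rw [SimpleGraph.Walk.length_map, hp]
  · obtain ⟨p, hp⟩ := (((hA.preconnected a a').map (homL A B u v)) :
      (glue A B u v).Reachable (Sum.inl a) (Sum.inl a')).exists_walk_length_eq_dist
    obtain ⟨q, hq⟩ := exists_walk_length_le (projA u v) (projA_spec A B u v) p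
    calc A.dist a a' ≤ q.length := SimpleGraph.dist_le _
      _ ≤ p.length := hq
      _ = _ := hp

lemma glue_dist_inr_inr (hA : A.Connected) (hB : B.Connected) (b b' : {b : β // b ≠ v}) :
    (glue A B u v).dist (Sum.inr b) (Sum.inr b') = B.dist b.1 b'.1 := by
  apply le_antisymm
  · obtain ⟨p, hp⟩ := (hB.preconnected b.1 b'.1).exists_walk_length_eq_dist
    calc (glue A B u v).dist (Sum.inr b) (Sum.inr b')
        ≤ ((p.map (homR A B u v)).copy (homR_coe_ne A B u v b.2)
            (homR_coe_ne A B u v b'.2)).length := SimpleGraph.dist_le _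
      _ = B.dist b.1 b'.1 := by
          rw [SimpleGraph.Walk.length_copy, SimpleGraph.Walk.length_map, hp]
  · obtain ⟨p, hp⟩ := ((glue_connected A B u v hA hB).preconnected (Sum.inr b)
      (Sum.inr b')).exists_walk_length_eq_dist
    obtain ⟨q, hq⟩ := exists_walk_length_le (projB u v) (projB_spec A B u v) p
    calc B.dist b.1 b'.1 ≤ q.length := SimpleGraph.dist_le _
      _ ≤ p.length := hq
      _ = _ := hp

lemma glue_cross_mem_support :
    ∀ {x y : α ⊕ {b : β // b ≠ v}} (p : (glue A B u v).Walk x y),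
      x.isLeft → y.isRight → Sum.inl u ∈ p.support := by
  intro x y p
  induction p with
  | nil =>
    intro hx hy
    obtain ⟨a, rfl⟩ := Sum.isLeft_iff.mp hx
    simp at hy
  | @cons x z y h p ih =>
    intro hx hy
    obtain ⟨a, rfl⟩ := Sum.isLeft_iff.mp hx
    cases z with
    | inl a' =>
      rw [SimpleGraph.Walk.support_cons]
      exact List.mem_cons_of_mem _ (ih rfl hy)
    | inr b' =>
      have : a = u := ((glue_adj_inl_inr A B u v).mp h).1
      subst this
      rw [SimpleGraph.Walk.support_cons]
      exact List.mem_cons_self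

lemma glue_dist_inl_inr (hA : A.Connected) (hB : B.Connected) (a : α) (b : {b : β // b ≠ v}) :
    (glue A B u v).dist (Sum.inl a) (Sum.inr b) = A.dist a u + B.dist v b.1 := by
  apply le_antisymm
  · obtain ⟨p, hp⟩ := (hA.preconnected a u).exists_walk_length_eq_dist
    obtain ⟨q, hq⟩ := (hB.preconnected v b.1).exists_walk_length_eq_dist
    calc (glue A B u v).dist (Sum.inl a) (Sum.inr b)
        ≤ ((p.map (homL A B u v)).append ((q.map (homR A B u v)).copy
            (homR_coe_v A B u v) (homR_coe_ne A B u v b.2))).length :=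
          SimpleGraph.dist_le _
      _ = A.dist a u + B.dist v b.1 := by
          simp only [SimpleGraph.Walk.length_append, SimpleGraph.Walk.length_copy,
            SimpleGraph.Walk.length_map, SimpleGraph.Walk.length_map, hp, hq]
          congr 1
          exact ((SimpleGraph.Walk.length_copy ..).trans (SimpleGraph.Walk.length_map ..)).trans hq
  · obtain ⟨p, hp⟩ := ((glue_connected A B u v hA hB).preconnected (Sum.inl a)
      (Sum.inr b)).exists_walk_length_eq_dist
    have hmem := glue_cross_mem_support A B u v p rfl rfl
    have hsplit : (p.takeUntil _ hmem).length + (p.dropUntil _ hmem).length = p.length := by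
      rw [← SimpleGraph.Walk.length_append, SimpleGraph.Walk.take_spec]
    obtain ⟨qa, hqa⟩ := exists_walk_length_le (projA u v) (projA_spec A B u v)
      (p.takeUntil _ hmem)
    obtain ⟨qb, hqb⟩ := exists_walk_length_le (projB u v) (projB_spec A B u v)
      (p.dropUntil _ hmem)
    have h1 : A.dist a u ≤ (p.takeUntil _ hmem).length :=
      le_trans (SimpleGraph.dist_le qa) hqa
    have h2 : B.dist v b.1 ≤ (p.dropUntil _ hmem).length :=
      le_trans (SimpleGraph.dist_le qb) hqb
    omega

end Walks

section Degrees

variable {α β : Type*} [Fintype α] [Fintype β]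
  (A : SimpleGraph α) (B : SimpleGraph β) (u : α) (v : β)

def embL (v₀ : β) : α ↪ α ⊕ {b : β // b ≠ v₀} := ⟨Sum.inl, Sum.inl_injective⟩

def embR (v₀ : β) : {b : β // b ≠ v₀} ↪ α ⊕ {b : β // b ≠ v₀} := ⟨Sum.inr, Sum.inr_injective⟩

lemma degree_glue_inl {a : α} (ha : a ≠ u) :
    (glue A B u v).degree (Sum.inl a) = A.degree a := by
  rw [SimpleGraph.degree, SimpleGraph.degree,
    show (glue A B u v).neighborFinset (Sum.inl a) = (A.neighborFinset a).map (embL v) by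
      ext x
      cases x with
      | inl a' => simp [embL]
      | inr b => simp [embL, ha]]
  exact Finset.card_map _

lemma degree_glue_merged :
    (glue A B u v).degree (Sum.inl u) = A.degree u + B.degree v := by
  have hset : (glue A B u v).neighborFinset (Sum.inl u) =
      (A.neighborFinset u).map (embL v) ∪
        ((B.neighborFinset v).subtype (· ≠ v)).map (embR v) := by
    ext x
    cases x with
    | inl a' => simp [embL, embR]
    | inr b => simp [embL, embR, Finset.mem_subtype, b.2]
  rw [SimpleGraph.degree, hset, Finset.card_union_of_disjoint (by
      simp [Finset.disjoint_left, embL, embR]),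
    Finset.card_map, Finset.card_map, Finset.card_subtype,
    Finset.filter_true_of_mem (fun b hb => ((SimpleGraph.mem_neighborFinset _ _ _).mp hb).ne')]
  rfl

lemma degree_glue_inr (b : {b : β // b ≠ v}) :
    (glue A B u v).degree (Sum.inr b) = B.degree b.1 := by
  have hinj : Function.Injective (toR (α := α) u v) := by
    intro x y hxy
    unfold toR at hxy
    split_ifs at hxy with hx hy hy <;> simp_all [Subtype.ext_iff]
  have hset : (glue A B u v).neighborFinset (Sum.inr b) =
      (B.neighborFinset b.1).map ⟨toR u v, hinj⟩ := by
    ext x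
    cases x with
    | inl a =>
      simp only [SimpleGraph.mem_neighborFinset, glue_adj_inr_inl, Finset.mem_map,
        Function.Embedding.coeFn_mk]
      constructor
      · rintro ⟨ha, h⟩
        exact ⟨v, by simpa [SimpleGraph.adj_comm] using h, by rw [toR_v u v, ha]⟩
      · rintro ⟨b', hb', hb''⟩
        by_cases h : b' = v
        · have hb2 : B.Adj b.1 v := h ▸ hb'
          rw [h, toR_v u v] at hb''
          exact ⟨(Sum.inl.inj hb'').symm, hb2.symm⟩
        · rw [toR_of_ne u v h] at hb''
          exact absurd hb'' (by simp)
    | inr b' =>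
      simp only [SimpleGraph.mem_neighborFinset, glue_adj_inr_inr, Finset.mem_map,
        Function.Embedding.coeFn_mk]
      constructor
      · intro h
        exact ⟨b'.1, h, toR_of_ne u v b'.2⟩
      · rintro ⟨b'', hb'', hb'''⟩
        by_cases h : b'' = v
        · rw [h, toR_v u v] at hb'''; exact absurd hb''' (by simp)
        · rw [toR_of_ne u v h] at hb'''
          obtain rfl : (⟨b'', h⟩ : {b : β // b ≠ v}) = b' := Sum.inr.inj hb'''
          exact hb''
  rw [SimpleGraph.degree, hset, Finset.card_map]
  rfl

end Degrees

section Pendants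

lemma one_le_degree_of_connected {V : Type*} [Fintype V] {G : SimpleGraph V}
    (hG : G.Connected) (h : 1 < Fintype.card V) (x : V) : 0 < G.degree x := by
  rw [SimpleGraph.degree_pos_iff_exists_adj]
  obtain ⟨y, hy⟩ := Fintype.exists_ne_of_one_lt_card h x
  obtain ⟨p⟩ := hG.preconnected x y
  cases p with
  | nil => exact absurd rfl hy
  | cons h p => exact ⟨_, h⟩

variable {α β : Type*} [Fintype α] [Fintype β]
  (A : SimpleGraph α) (B : SimpleGraph β) (u : α) (v : β)

lemma pendant_ne {b : β} (hv : B.degree v ≠ 1) (hb : b ∈ pendants B) : b ≠ v := by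
  rintro rfl
  exact hv (Finset.mem_filter.mp hb).2

variable (hA : A.Connected) (hB : B.Connected)
  (hcA : 1 < Fintype.card α) (hcB : 1 < Fintype.card β)
  (hu : A.degree u ≠ 1) (hv : B.degree v ≠ 1)

include hA hB hcA hcB hu hv

lemma pendants_glue :
    pendants (glue A B u v) =
      (pendants A).map (embL v) ∪ ((pendants B).subtype (· ≠ v)).map (embR v) := by
  ext x
  simp only [pendants, Finset.mem_filter, Finset.mem_univ, true_and, Finset.mem_union,
    Finset.mem_map, Function.Embedding.coeFn_mk, embL, embR, Finset.mem_subtype]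
  cases x with
  | inl a =>
    by_cases ha : a = u
    · have h1 := one_le_degree_of_connected hA hcA u
      have h2 := one_le_degree_of_connected hB hcB v
      have hd := degree_glue_merged A B u v
      constructor
      · intro h
        rw [ha, hd] at h
        omega
      · rintro (⟨a', ha', h⟩ | ⟨b', hb', h⟩)
        · obtain rfl : a' = a := Sum.inl.inj h
          rw [ha] at ha'
          exact absurd ha' hu
        · exact absurd h (by simp)
    · rw [degree_glue_inl A B u v ha]
      constructor
      · intro h
        exact Or.inl ⟨a, h, rfl⟩
      · rintro (⟨a', ha', h⟩ | ⟨b', hb', h⟩)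
        · obtain rfl : a' = a := Sum.inl.inj h
          exact ha'
        · exact absurd h (by simp)
  | inr b =>
    rw [degree_glue_inr A B u v b]
    constructor
    · intro h
      exact Or.inr ⟨b, by simpa [pendants] using h, rfl⟩
    · rintro (⟨a', ha', h⟩ | ⟨b', hb', h⟩)
      · exact absurd h (by simp)
      · obtain rfl : b' = b := Sum.inr.inj h
        simpa [pendants] using hb'

lemma glue_disj : Disjoint ((pendants A).map (embL v))
    (((pendants B).subtype (· ≠ v)).map (embR v)) := by
  simp [Finset.disjoint_left, embL, embR]

lemma card_pendants_glue :
    (pendants (glue A B u v)).card = (pendants A).card + (pendants B).card := by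
  rw [pendants_glue A B u v hA hB hcA hcB hu hv,
    Finset.card_union_of_disjoint (glue_disj A B u v hA hB hcA hcB hu hv),
    Finset.card_map, Finset.card_map, Finset.card_subtype,
    Finset.filter_true_of_mem fun b hb => pendant_ne B v hv hb]

lemma dplus_glue :
    dplus (glue A B u v) (Sum.inl u) = dplus A u + dplus B v := by
  unfold dplus
  rw [pendants_glue A B u v hA hB hcA hcB hu hv,
    Finset.sum_union (glue_disj A B u v hA hB hcA hcB hu hv),
    Finset.sum_map, Finset.sum_map]
  congr 1
  · exact Finset.sum_congr rfl fun a _ => glue_dist_inl_inl A B u v hA u a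
  · calc ∑ b ∈ (pendants B).subtype (· ≠ v), (glue A B u v).dist (Sum.inl u) ((embR v) b)
        = ∑ b ∈ (pendants B).subtype (· ≠ v), B.dist v b.1 :=
          Finset.sum_congr rfl fun b _ => by
            rw [show (embR v) b = Sum.inr b from rfl,
              glue_dist_inl_inr A B u v hA hB u b, SimpleGraph.dist_self, zero_add]
      _ = ∑ b ∈ pendants B, B.dist v b :=
          Finset.sum_subtype_of_mem _ fun b hb => pendant_ne B v hv hb

end Pendants

section TWGlue

lemma two_dvd_sum_sym {V : Type*} (s : Finset V) (d : V → V → ℕ)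
    (hsym : ∀ x y, d x y = d y x) (hdiag : ∀ x, d x x = 0) :
    2 ∣ ∑ x ∈ s, ∑ y ∈ s, d x y := by
  classical
  induction s using Finset.induction_on with
  | empty => simp
  | @insert a s ha ih =>
    rw [Finset.sum_insert ha, Finset.sum_insert ha, hdiag, zero_add]
    have h1 : ∑ x ∈ s, ∑ y ∈ insert a s, d x y
        = ∑ x ∈ s, d x a + ∑ x ∈ s, ∑ y ∈ s, d x y := by
      rw [← Finset.sum_add_distrib]
      exact Finset.sum_congr rfl fun x _ => by rw [Finset.sum_insert ha]
    rw [h1, ← add_assoc]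
    have h2 : ∑ y ∈ s, d a y + ∑ x ∈ s, d x a = 2 * ∑ y ∈ s, d a y := by
      rw [two_mul]
      congr 1
      exact Finset.sum_congr rfl fun x _ => hsym x a
    rw [h2]
    exact Nat.dvd_add (Dvd.intro _ rfl) ih

variable {α β : Type*} [Fintype α] [Fintype β]
  (A : SimpleGraph α) (B : SimpleGraph β) (u : α) (v : β)
  (hA : A.Connected) (hB : B.Connected)
  (hcA : 1 < Fintype.card α) (hcB : 1 < Fintype.card β)
  (hu : A.degree u ≠ 1) (hv : B.degree v ≠ 1)

include hA hB hcA hcB hu hv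

lemma sum_sum_pendants_glue :
    ∑ x ∈ pendants (glue A B u v), ∑ y ∈ pendants (glue A B u v), (glue A B u v).dist x y
      = (∑ x ∈ pendants A, ∑ y ∈ pendants A, A.dist x y)
        + (∑ x ∈ pendants B, ∑ y ∈ pendants B, B.dist x y)
        + 2 * ((pendants B).card * dplus A u + (pendants A).card * dplus B v) := by
  have disj := glue_disj A B u v hA hB hcA hcB hu hv
  have hsubB : ∀ (f : β → ℕ), ∑ b ∈ (pendants B).subtype (· ≠ v), f b.1 = ∑ b ∈ pendants B, f b :=
    fun f => Finset.sum_subtype_of_mem _ fun b hb => pendant_ne B v hv hb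
  have hdplusA : ∀ a, A.dist a u = A.dist u a := fun a => SimpleGraph.dist_comm ..
  have hLL : ∑ x ∈ (pendants A).map (embL v), ∑ y ∈ (pendants A).map (embL v),
      (glue A B u v).dist x y = ∑ x ∈ pendants A, ∑ y ∈ pendants A, A.dist x y := by
    rw [Finset.sum_map]
    refine Finset.sum_congr rfl fun a _ => ?_
    rw [Finset.sum_map]
    exact Finset.sum_congr rfl fun a' _ => glue_dist_inl_inl A B u v hA a a'
  have hRR : ∑ x ∈ ((pendants B).subtype (· ≠ v)).map (embR v),
      ∑ y ∈ ((pendants B).subtype (· ≠ v)).map (embR v), (glue A B u v).dist x y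
      = ∑ x ∈ pendants B, ∑ y ∈ pendants B, B.dist x y := by
    rw [Finset.sum_map]
    rw [show (∑ b ∈ (pendants B).subtype (· ≠ v), ∑ y ∈ ((pendants B).subtype (· ≠ v)).map (embR v),
        (glue A B u v).dist ((embR v) b) y)
        = ∑ b ∈ (pendants B).subtype (· ≠ v), ∑ b' ∈ pendants B, B.dist b.1 b' from
      Finset.sum_congr rfl fun b _ => by
        rw [Finset.sum_map]
        rw [show (∑ b' ∈ (pendants B).subtype (· ≠ v), (glue A B u v).dist ((embR v) b) ((embR v) b'))
            = ∑ b' ∈ (pendants B).subtype (· ≠ v), B.dist b.1 b'.1 from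
          Finset.sum_congr rfl fun b' _ => glue_dist_inr_inr A B u v hA hB b b']
        exact hsubB fun x => B.dist b.1 x]
    exact hsubB fun x => ∑ b' ∈ pendants B, B.dist x b'
  have hLR : ∑ x ∈ (pendants A).map (embL v), ∑ y ∈ ((pendants B).subtype (· ≠ v)).map (embR v),
      (glue A B u v).dist x y = (pendants B).card * dplus A u + (pendants A).card * dplus B v := by
    rw [Finset.sum_map]
    rw [show (∑ a ∈ pendants A, ∑ y ∈ ((pendants B).subtype (· ≠ v)).map (embR v),
        (glue A B u v).dist ((embL v) a) y)
        = ∑ a ∈ pendants A, ((pendants B).card * A.dist u a + dplus B v) from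
      Finset.sum_congr rfl fun a _ => by
        rw [Finset.sum_map]
        rw [show (∑ b ∈ (pendants B).subtype (· ≠ v), (glue A B u v).dist ((embL v) a) ((embR v) b))
            = ∑ b ∈ (pendants B).subtype (· ≠ v), (A.dist a u + B.dist v b.1) from
          Finset.sum_congr rfl fun b _ => glue_dist_inl_inr A B u v hA hB a b]
        rw [hsubB fun x => A.dist a u + B.dist v x, Finset.sum_add_distrib,
          Finset.sum_const, smul_eq_mul, hdplusA a]
        rfl]
    rw [Finset.sum_add_distrib, Finset.sum_const, smul_eq_mul, ← Finset.mul_sum]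
    rfl
  have hRL : ∑ x ∈ ((pendants B).subtype (· ≠ v)).map (embR v), ∑ y ∈ (pendants A).map (embL v),
      (glue A B u v).dist x y = (pendants B).card * dplus A u + (pendants A).card * dplus B v := by
    rw [show (∑ x ∈ ((pendants B).subtype (· ≠ v)).map (embR v), ∑ y ∈ (pendants A).map (embL v),
        (glue A B u v).dist x y)
        = ∑ y ∈ (pendants A).map (embL v), ∑ x ∈ ((pendants B).subtype (· ≠ v)).map (embR v),
          (glue A B u v).dist x y from Finset.sum_comm]
    rw [show (∑ y ∈ (pendants A).map (embL v), ∑ x ∈ ((pendants B).subtype (· ≠ v)).map (embR v),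
        (glue A B u v).dist x y)
        = ∑ y ∈ (pendants A).map (embL v), ∑ x ∈ ((pendants B).subtype (· ≠ v)).map (embR v),
          (glue A B u v).dist y x from
      Finset.sum_congr rfl fun y _ => Finset.sum_congr rfl fun x _ => SimpleGraph.dist_comm ..]
    exact hLR
  rw [pendants_glue A B u v hA hB hcA hcB hu hv, Finset.sum_union disj]
  simp only [Finset.sum_union disj]
  rw [Finset.sum_add_distrib, Finset.sum_add_distrib, hLL, hRR, hLR, hRL]
  ring

lemma TW_glue :
    TW (glue A B u v) = TW A + TW B
      + (pendants B).card * dplus A u + (pendants A).card * dplus B v := by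
  obtain ⟨m, hm⟩ := two_dvd_sum_sym (pendants A) A.dist
    (fun x y => SimpleGraph.dist_comm ..) fun x => SimpleGraph.dist_self
  obtain ⟨n, hn⟩ := two_dvd_sum_sym (pendants B) B.dist
    (fun x y => SimpleGraph.dist_comm ..) fun x => SimpleGraph.dist_self
  unfold TW
  rw [sum_sum_pendants_glue A B u v hA hB hcA hcB hu hv, hm, hn]
  omega

end TWGlue

/-- Gluing formula for the terminal Wiener index of three trees identified at a common
non-pendant vertex (the merged vertex of `glue Ta Tb u v` is `Sum.inl u`). -/
theorem stmt7 {α β γ : Type*} [Fintype α] [Fintype β] [Fintype γ]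
    (Ta : SimpleGraph α) (Tb : SimpleGraph β) (Tc : SimpleGraph γ)
    (u : α) (v : β) (w : γ)
    (hTa : Ta.IsTree) (hTb : Tb.IsTree) (hTc : Tc.IsTree)
    (ha : 3 ≤ Fintype.card α) (hb : 3 ≤ Fintype.card β) (hc : 3 ≤ Fintype.card γ)
    (hu : Ta.degree u ≠ 1) (hv : Tb.degree v ≠ 1) (hw : Tc.degree w ≠ 1) :
    TW (glue (glue Ta Tb u v) Tc (Sum.inl u) w) =
      TW Ta + TW Tb + TW Tc +
        ((pendants Tb).card + (pendants Tc).card) * dplus Ta u +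
        ((pendants Ta).card + (pendants Tc).card) * dplus Tb v +
        ((pendants Ta).card + (pendants Tb).card) * dplus Tc w := by
  have hA := hTa.isConnected
  have hB := hTb.isConnected
  have hC := hTc.isConnected
  have hcA : 1 < Fintype.card α := by omega
  have hcB : 1 < Fintype.card β := by omega
  have hcC : 1 < Fintype.card γ := by omega
  have hG1 : (glue Ta Tb u v).Connected := glue_connected Ta Tb u v hA hB
  have hcG1 : 1 < Fintype.card (α ⊕ {b : β // b ≠ v}) := by
    rw [Fintype.card_sum]
    omega
  have hdu : (glue Ta Tb u v).degree (Sum.inl u) ≠ 1 := by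
    rw [degree_glue_merged Ta Tb u v]
    have h1 := one_le_degree_of_connected hA hcA u
    have h2 := one_le_degree_of_connected hB hcB v
    omega
  rw [TW_glue (glue Ta Tb u v) Tc (Sum.inl u) w hG1 hC hcG1 hcC hdu hw,
    TW_glue Ta Tb u v hA hB hcA hcB hu hv,
    card_pendants_glue Ta Tb u v hA hB hcA hcB hu hv,
    dplus_glue Ta Tb u v hA hB hcA hcB hu hv]
  ring
end
end

section
/- Let T be a tree that is the union of two vertex-disjoint trees T_a and T_b (with l₁ and l₂ pendant vertices respectively, each tree having at least 3 vertices) joined by a new cut edge uv with u ∈ V(T_a) and v ∈ V(T_b) non-pendant in their trees. Then TW(T) = TW(T_a) + TW(T_b) + l₂·d⁺_{T_a}(u) + l₁·d⁺_{T_b}(v) + l₁·l₂. -/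
open Finset SimpleGraph

noncomputable section
open scoped Classical

/-- The graph obtained from disjoint `A` and `B` by adding the new (cut) edge `uv`. -/
def joinEdge {α β : Type*} (A : SimpleGraph α) (B : SimpleGraph β) (u : α) (v : β) :
    SimpleGraph (α ⊕ β) :=
  SimpleGraph.fromRel fun x y =>
    match x, y with
    | Sum.inl a, Sum.inl a' => A.Adj a a'
    | Sum.inr b, Sum.inr b' => B.Adj b b'
    | Sum.inl a, Sum.inr b => a = u ∧ b = v
    | Sum.inr _, Sum.inl _ => False

section Aux

variable {α β : Type*} (Ta : SimpleGraph α) (Tb : SimpleGraph β) (u : α) (v : β)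

lemma je_adj_inl_inl (a a' : α) :
    (joinEdge Ta Tb u v).Adj (Sum.inl a) (Sum.inl a') ↔ Ta.Adj a a' := by
  simp only [joinEdge, fromRel_adj, ne_eq, Sum.inl.injEq]
  constructor
  · rintro ⟨h, h1 | h1⟩
    · exact h1
    · exact h1.symm
  · intro h; exact ⟨h.ne, Or.inl h⟩

lemma je_adj_inr_inr (b b' : β) :
    (joinEdge Ta Tb u v).Adj (Sum.inr b) (Sum.inr b') ↔ Tb.Adj b b' := by
  simp only [joinEdge, fromRel_adj, ne_eq, Sum.inr.injEq]
  constructor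
  · rintro ⟨h, h1 | h1⟩
    · exact h1
    · exact h1.symm
  · intro h; exact ⟨h.ne, Or.inl h⟩

lemma je_adj_inl_inr (a : α) (b : β) :
    (joinEdge Ta Tb u v).Adj (Sum.inl a) (Sum.inr b) ↔ a = u ∧ b = v := by
  simp [joinEdge, fromRel_adj]

lemma je_adj_inr_inl (a : α) (b : β) :
    (joinEdge Ta Tb u v).Adj (Sum.inr b) (Sum.inl a) ↔ a = u ∧ b = v := by
  simp [joinEdge, fromRel_adj]

/-- generic projection of walks -/
lemma je_proj {γ : Type*} (G : SimpleGraph γ) (f : α ⊕ β → γ)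
    (hf : ∀ x y, (joinEdge Ta Tb u v).Adj x y → f x = f y ∨ G.Adj (f x) (f y)) :
    ∀ {x y : α ⊕ β} (p : (joinEdge Ta Tb u v).Walk x y),
      ∃ q : G.Walk (f x) (f y), q.length ≤ p.length := by
  intro x y p
  induction p with
  | nil => exact ⟨Walk.nil, le_refl _⟩
  | @cons x' z y' h p ih =>
    obtain ⟨q, hq⟩ := ih
    rcases hf _ _ h with he | hA
    · rw [he]
      exact ⟨q, by simp [Walk.length_cons]; omega⟩
    · exact ⟨Walk.cons hA q, by simp [Walk.length_cons]; omega⟩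

lemma walkA_lb {a a' : α} (p : (joinEdge Ta Tb u v).Walk (Sum.inl a) (Sum.inl a')) :
    Ta.dist a a' ≤ p.length := by
  obtain ⟨q, hq⟩ := je_proj Ta Tb u v Ta (Sum.elim id (fun _ => u))
    (by
      rintro (x | x) (y | y) h <;>
        simp only [Sum.elim_inl, Sum.elim_inr, id]
      · exact Or.inr ((je_adj_inl_inl Ta Tb u v x y).1 h)
      · exact Or.inl ((je_adj_inl_inr Ta Tb u v x y).1 h).1
      · exact Or.inl (((je_adj_inr_inl Ta Tb u v y x).1 h).1.symm)
      · exact Or.inl trivial) p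
  exact le_trans (SimpleGraph.dist_le q) hq

lemma walkB_lb {b b' : β} (p : (joinEdge Ta Tb u v).Walk (Sum.inr b) (Sum.inr b')) :
    Tb.dist b b' ≤ p.length := by
  obtain ⟨q, hq⟩ := je_proj Ta Tb u v Tb (Sum.elim (fun _ => v) id)
    (by
      rintro (x | x) (y | y) h <;>
        simp only [Sum.elim_inl, Sum.elim_inr, id]
      · exact Or.inl trivial
      · exact Or.inl (((je_adj_inl_inr Ta Tb u v x y).1 h).2.symm)
      · exact Or.inl ((je_adj_inr_inl Ta Tb u v y x).1 h).2
      · exact Or.inr ((je_adj_inr_inr Ta Tb u v x y).1 h)) p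
  exact le_trans (SimpleGraph.dist_le q) hq

def homA : Ta →g joinEdge Ta Tb u v where
  toFun := Sum.inl
  map_rel' := fun h => (je_adj_inl_inl Ta Tb u v _ _).2 h

def homB : Tb →g joinEdge Ta Tb u v where
  toFun := Sum.inr
  map_rel' := fun h => (je_adj_inr_inr Ta Tb u v _ _).2 h

lemma je_dist_inl_inl (hca : Ta.Connected) (a a' : α) :
    (joinEdge Ta Tb u v).dist (Sum.inl a) (Sum.inl a') = Ta.dist a a' := by
  obtain ⟨p, hp⟩ := hca.exists_walk_length_eq_dist a a'
  have h1 : (joinEdge Ta Tb u v).dist (Sum.inl a) (Sum.inl a') ≤ Ta.dist a a' := by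
    have := SimpleGraph.dist_le (p.map (homA Ta Tb u v))
    simp only [Walk.length_map, hp] at this
    exact this
  refine le_antisymm h1 ?_
  obtain ⟨q, hq⟩ := (Reachable.mono le_rfl ⟨p.map (homA Ta Tb u v)⟩).exists_walk_length_eq_dist
  exact le_trans (walkA_lb Ta Tb u v q) (le_of_eq hq)

lemma je_dist_inr_inr (hcb : Tb.Connected) (b b' : β) :
    (joinEdge Ta Tb u v).dist (Sum.inr b) (Sum.inr b') = Tb.dist b b' := by
  obtain ⟨p, hp⟩ := hcb.exists_walk_length_eq_dist b b'
  have h1 : (joinEdge Ta Tb u v).dist (Sum.inr b) (Sum.inr b') ≤ Tb.dist b b' := by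
    have := SimpleGraph.dist_le (p.map (homB Ta Tb u v))
    simp only [Walk.length_map, hp] at this
    exact this
  refine le_antisymm h1 ?_
  obtain ⟨q, hq⟩ := (Reachable.mono le_rfl ⟨p.map (homB Ta Tb u v)⟩).exists_walk_length_eq_dist
  exact le_trans (walkB_lb Ta Tb u v q) (le_of_eq hq)

lemma cross_lb (hca : Ta.Connected) :
    ∀ {x y : α ⊕ β} (p : (joinEdge Ta Tb u v).Walk x y) (a : α) (b : β),
      x = Sum.inl a → y = Sum.inr b → Ta.dist a u + 1 + Tb.dist v b ≤ p.length := by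
  intro x y p
  induction p with
  | nil => rintro a b rfl h; simp at h
  | @cons x z y h p ih =>
    rintro a b rfl rfl
    rcases z with a' | b'
    · have h1 : Ta.Adj a a' := (je_adj_inl_inl Ta Tb u v a a').1 h
      have h2 := ih a' b rfl rfl
      have hd : Ta.dist a u ≤ Ta.dist a' u + 1 := by
        obtain ⟨q, hq⟩ := hca.exists_walk_length_eq_dist a' u
        have := SimpleGraph.dist_le (Walk.cons h1 q)
        simpa [hq] using this
      simp only [Walk.length_cons]
      omega
    · obtain ⟨h3, h4⟩ := (je_adj_inl_inr Ta Tb u v a b').1 h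
      have h2 : Tb.dist b' b ≤ p.length := walkB_lb Ta Tb u v p
      have h5 : Ta.dist a u = 0 := by rw [h3]; simp
      have h6 : Tb.dist v b = Tb.dist b' b := by rw [h4]
      simp only [Walk.length_cons]
      omega

lemma je_dist_inl_inr (hca : Ta.Connected) (hcb : Tb.Connected) (a : α) (b : β) :
    (joinEdge Ta Tb u v).dist (Sum.inl a) (Sum.inr b) =
      Ta.dist a u + 1 + Tb.dist v b := by
  obtain ⟨pa, hpa⟩ := hca.exists_walk_length_eq_dist a u
  obtain ⟨pb, hpb⟩ := hcb.exists_walk_length_eq_dist v b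
  have hadj : (joinEdge Ta Tb u v).Adj (Sum.inl u) (Sum.inr v) :=
    (je_adj_inl_inr Ta Tb u v u v).2 ⟨rfl, rfl⟩
  set w : (joinEdge Ta Tb u v).Walk (Sum.inl a) (Sum.inr b) :=
    (pa.map (homA Ta Tb u v)).append (Walk.cons hadj (pb.map (homB Ta Tb u v))) with hw
  have hle : (joinEdge Ta Tb u v).dist (Sum.inl a) (Sum.inr b) ≤
      Ta.dist a u + 1 + Tb.dist v b := by
    have := SimpleGraph.dist_le w
    have hl : w.length = pa.length + (pb.length + 1) :=
      (Walk.length_append _ _).trans (congrArg₂ (· + ·) (Walk.length_map _ _)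
        ((Walk.length_cons _ _).trans (congrArg (· + 1) (Walk.length_map _ _))))
    omega
  refine le_antisymm hle ?_
  obtain ⟨q, hq⟩ := (Reachable.mono le_rfl ⟨w⟩).exists_walk_length_eq_dist
  rw [← hq]
  exact cross_lb Ta Tb u v hca q a b rfl rfl

section deg
variable [Fintype α] [Fintype β]

lemma je_degree_inl (a : α) :
    (joinEdge Ta Tb u v).degree (Sum.inl a) =
      Ta.degree a + if a = u then 1 else 0 := by
  have hn : (joinEdge Ta Tb u v).neighborFinset (Sum.inl a) =
      (Ta.neighborFinset a).image Sum.inl ∪ (if a = u then {Sum.inr v} else ∅) := by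
    ext w
    rcases w with a' | b'
    · by_cases hau : a = u <;>
        simp [mem_neighborFinset, je_adj_inl_inl, hau]
    · by_cases hau : a = u <;>
        simp [mem_neighborFinset, je_adj_inl_inr, hau, eq_comm]
  rw [SimpleGraph.degree, hn, Finset.card_union_of_disjoint,
    Finset.card_image_of_injective _ Sum.inl_injective]
  · congr 1
    by_cases hau : a = u <;> simp [hau]
  · by_cases hau : a = u <;> simp [hau, Finset.disjoint_left]

lemma je_degree_inr (b : β) :
    (joinEdge Ta Tb u v).degree (Sum.inr b) =
      Tb.degree b + if b = v then 1 else 0 := by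
  have hn : (joinEdge Ta Tb u v).neighborFinset (Sum.inr b) =
      (Tb.neighborFinset b).image Sum.inr ∪ (if b = v then {Sum.inl u} else ∅) := by
    ext w
    rcases w with a' | b'
    · by_cases hbv : b = v <;>
        simp [mem_neighborFinset, je_adj_inr_inl, hbv, eq_comm]
    · by_cases hbv : b = v <;>
        simp [mem_neighborFinset, je_adj_inr_inr, hbv]
  rw [SimpleGraph.degree, hn, Finset.card_union_of_disjoint,
    Finset.card_image_of_injective _ Sum.inr_injective]
  · congr 1
    by_cases hbv : b = v <;> simp [hbv]
  · by_cases hbv : b = v <;> simp [hbv, Finset.disjoint_left]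

lemma pos_degree (hc : Ta.Connected) (h2 : 2 ≤ Fintype.card α) (a : α) :
    0 < Ta.degree a := by
  obtain ⟨b, hb⟩ := Fintype.exists_ne_of_one_lt_card (by omega) a
  obtain ⟨p⟩ := hc.preconnected a b
  cases p with
  | nil => exact absurd rfl hb.symm
  | cons h _ => exact (Ta.degree_pos_iff_exists_adj a).2 ⟨_, h⟩

lemma je_pendants (hc : Ta.Connected) (hc' : Tb.Connected)
    (h2 : 2 ≤ Fintype.card α) (h2' : 2 ≤ Fintype.card β)
    (hu : Ta.degree u ≠ 1) (hv : Tb.degree v ≠ 1) :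
    pendants (joinEdge Ta Tb u v) =
      (pendants Ta).image Sum.inl ∪ (pendants Tb).image Sum.inr := by
  have hdu := pos_degree Ta hc h2 u
  have hdv := pos_degree Tb hc' h2' v
  ext w
  rcases w with a | b
  · simp only [pendants, Finset.mem_filter, Finset.mem_univ, true_and, Finset.mem_union,
      Finset.mem_image, je_degree_inl]
    constructor
    · intro h
      by_cases hau : a = u
      · subst hau; simp at h; omega
      · simp [hau] at h
        exact Or.inl ⟨a, by simp [h], rfl⟩
    · rintro (⟨a', ⟨h1, h2⟩⟩ | ⟨b', ⟨h1, h2⟩⟩)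
      · obtain rfl : a' = a := Sum.inl_injective h2
        have hau : a' ≠ u := by rintro rfl; exact hu h1
        simp [hau, h1]
      · simp at h2
  · simp only [pendants, Finset.mem_filter, Finset.mem_univ, true_and, Finset.mem_union,
      Finset.mem_image, je_degree_inr]
    constructor
    · intro h
      by_cases hbv : b = v
      · subst hbv; simp at h; omega
      · simp [hbv] at h
        exact Or.inr ⟨b, by simp [h], rfl⟩
    · rintro (⟨a', ⟨h1, h2⟩⟩ | ⟨b', ⟨h1, h2⟩⟩)
      · simp at h2
      · obtain rfl : b' = b := Sum.inr_injective h2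
        have hbv : b' ≠ v := by rintro rfl; exact hv h1
        simp [hbv, h1]
end deg

end Aux

lemma even_double_sum {γ : Type*} (s : Finset γ) (f : γ → γ → ℕ)
    (hsym : ∀ i j, f i j = f j i) (hdiag : ∀ i, f i i = 0) :
    Even (∑ i ∈ s, ∑ j ∈ s, f i j) := by
  classical
  induction s using Finset.induction with
  | empty => simp
  | @insert a s hx ih =>
    rw [Finset.sum_insert hx]
    have h1 : ∑ j ∈ insert a s, f a j = ∑ j ∈ s, f a j := by
      rw [Finset.sum_insert hx, hdiag]; omega
    have h2 : ∑ i ∈ s, ∑ j ∈ insert a s, f i j =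
        (∑ i ∈ s, f i a) + ∑ i ∈ s, ∑ j ∈ s, f i j := by
      rw [← Finset.sum_add_distrib]
      refine Finset.sum_congr rfl fun i _ => ?_
      rw [Finset.sum_insert hx]
    have h3 : ∑ i ∈ s, f i a = ∑ j ∈ s, f a j :=
      Finset.sum_congr rfl fun i _ => hsym i a
    obtain ⟨k, hk⟩ := ih
    exact ⟨(∑ j ∈ s, f a j) + k, by omega⟩

lemma two_mul_TW {V : Type*} (G : SimpleGraph V) [Fintype V] :
    ∑ x ∈ pendants G, ∑ y ∈ pendants G, G.dist x y = 2 * TW G := by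
  obtain ⟨k, hk⟩ := even_double_sum (pendants G) G.dist
    (fun i j => SimpleGraph.dist_comm) (fun i => SimpleGraph.dist_self)
  rw [TW, hk]
  omega

/-- Formula for the terminal Wiener index of the tree obtained by joining two disjoint
trees by a new cut edge `uv` at non-pendant vertices. -/
theorem stmt8 {α β : Type*} [Fintype α] [Fintype β]
    (Ta : SimpleGraph α) (Tb : SimpleGraph β) (u : α) (v : β)
    (hTa : Ta.IsTree) (hTb : Tb.IsTree)
    (ha : 3 ≤ Fintype.card α) (hb : 3 ≤ Fintype.card β)
    (hu : Ta.degree u ≠ 1) (hv : Tb.degree v ≠ 1) :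
    TW (joinEdge Ta Tb u v) =
      TW Ta + TW Tb + (pendants Tb).card * dplus Ta u +
        (pendants Ta).card * dplus Tb v +
        (pendants Ta).card * (pendants Tb).card := by
  have hca : Ta.Connected := hTa.isConnected
  have hcb : Tb.Connected := hTb.isConnected
  set J := joinEdge Ta Tb u v with hJ
  set A := (pendants Ta).image (Sum.inl : α → α ⊕ β) with hA
  set B := (pendants Tb).image (Sum.inr : β → α ⊕ β) with hB
  have hpend : pendants J = A ∪ B :=
    je_pendants Ta Tb u v hca hcb (by omega) (by omega) hu hv
  have hdisj : Disjoint A B := by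
    rw [hA, hB, Finset.disjoint_left]
    rintro x hx hx'
    simp only [Finset.mem_image] at hx hx'
    obtain ⟨a, -, rfl⟩ := hx
    obtain ⟨b, -, h⟩ := hx'
    exact absurd h (by simp)
  have hinjA : ∀ x ∈ pendants Ta, ∀ y ∈ pendants Ta,
      (Sum.inl : α → α ⊕ β) x = Sum.inl y → x = y :=
    fun x _ y _ h => Sum.inl_injective h
  have hinjB : ∀ x ∈ pendants Tb, ∀ y ∈ pendants Tb,
      (Sum.inr : β → α ⊕ β) x = Sum.inr y → x = y :=
    fun x _ y _ h => Sum.inr_injective h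
  -- the four partial double sums
  have hAA : ∑ x ∈ A, ∑ y ∈ A, J.dist x y = 2 * TW Ta := by
    rw [hA, Finset.sum_image hinjA]
    rw [← two_mul_TW Ta]
    refine Finset.sum_congr rfl fun a _ => ?_
    rw [Finset.sum_image hinjA]
    exact Finset.sum_congr rfl fun a' _ => je_dist_inl_inl Ta Tb u v hca a a'
  have hBB : ∑ x ∈ B, ∑ y ∈ B, J.dist x y = 2 * TW Tb := by
    rw [hB, Finset.sum_image hinjB]
    rw [← two_mul_TW Tb]
    refine Finset.sum_congr rfl fun b _ => ?_
    rw [Finset.sum_image hinjB]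
    exact Finset.sum_congr rfl fun b' _ => je_dist_inr_inr Ta Tb u v hcb b b'
  have hdu : ∑ a ∈ pendants Ta, Ta.dist a u = dplus Ta u := by
    rw [dplus]
    exact Finset.sum_congr rfl fun a _ => SimpleGraph.dist_comm
  have hAB : ∑ x ∈ A, ∑ y ∈ B, J.dist x y =
      (pendants Tb).card * dplus Ta u + (pendants Ta).card * dplus Tb v +
        (pendants Ta).card * (pendants Tb).card := by
    rw [hA, hB, Finset.sum_image hinjA]
    have hstep : ∀ a : α, ∑ y ∈ (pendants Tb).image (Sum.inr : β → α ⊕ β),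
        J.dist (Sum.inl a) y =
        (pendants Tb).card * (Ta.dist a u + 1) + dplus Tb v := by
      intro a
      rw [Finset.sum_image hinjB]
      have : ∀ b ∈ pendants Tb, J.dist (Sum.inl a) (Sum.inr b) =
          (Ta.dist a u + 1) + Tb.dist v b := by
        intro b _
        rw [je_dist_inl_inr Ta Tb u v hca hcb a b]
      rw [Finset.sum_congr rfl this, Finset.sum_add_distrib, Finset.sum_const,
        smul_eq_mul, dplus]
    rw [Finset.sum_congr rfl fun a _ => hstep a, Finset.sum_add_distrib,
      Finset.sum_const, smul_eq_mul, ← Finset.mul_sum, Finset.sum_add_distrib,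
      Finset.sum_const, smul_eq_mul, mul_one, hdu]
    ring
  have hBA : ∑ x ∈ B, ∑ y ∈ A, J.dist x y =
      (pendants Tb).card * dplus Ta u + (pendants Ta).card * dplus Tb v +
        (pendants Ta).card * (pendants Tb).card := by
    rw [← hAB]
    rw [Finset.sum_comm]
    refine Finset.sum_congr rfl fun x _ => Finset.sum_congr rfl fun y _ => ?_
    exact SimpleGraph.dist_comm
  have hS : ∑ x ∈ pendants J, ∑ y ∈ pendants J, J.dist x y =
      2 * (TW Ta + TW Tb + (pendants Tb).card * dplus Ta u +
        (pendants Ta).card * dplus Tb v +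
        (pendants Ta).card * (pendants Tb).card) := by
    rw [hpend, Finset.sum_union hdisj]
    simp only [Finset.sum_union hdisj (f := fun y => _)]
    rw [Finset.sum_add_distrib, Finset.sum_add_distrib, hAA, hBB, hAB, hBA]
    ring
  rw [TW, hS]
  omega
end
end
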